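/- arXiv:2407.09821 — 4 statements merged into one kernel-verified Lean document; each statement's English description precedes it below -/
import Mathlib

section
/- Let k₀, k₁, m₀, m₁, g₀, g₁ ∈ ℂ and set p(X) = k₀ + k₁X, q(X) = m₀ + m₁X, w(X) = g₀ + g₁X. Assume the coefficient of X^r in (p² + q² + w²)² vanishes for r = 0 and r = 1. Let D ⊆ ℂ be open, F : ℂ → ℂ holomorphic on D, ξ_r(x,y,z) = k_r x + m_r y + g_r z for r = 0, 1, and Π = {(x,y,z) ∈ ℝ³ : ξ₀(x,y,z) ∈ D}. Then the function U₁(x,y,z) = ξ₁(x,y,z)·F′(ξ₀(x,y,z)) satisfies the three-dimensional biharmonic equation Δ²U₁ = 0 at every point of Π. -/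
/-!
On `Π`, every partial derivative of `c F⁽ⁿ⁾(ξ₀) + d ξ₁ F⁽ⁿ⁺¹⁾(ξ₀)` has the same shape: writing
`a = (k₀, m₀, g₀)` and `b = (k₁, m₁, g₁)`, the derivative `∂ᵢ` acts on `(c, d)` by the matrix
`[[aᵢ, bᵢ], [0, aᵢ]]`. So the Laplacian acts by `[[a·a, 2 a·b], [0, a·a]]`, and
`Δ²U₁ = 4 (a·a)(a·b) F⁽⁴⁾(ξ₀) + (a·a)² ξ₁ F⁽⁵⁾(ξ₀)`. The constant coefficient of
`(p² + q² + w²)²` is `(a·a)²`, so `a·a = 0` and both terms vanish.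
-/

open Polynomial

/-- Partial derivative in the first variable. -/
noncomputable def pdx (U : ℝ → ℝ → ℝ → ℂ) : ℝ → ℝ → ℝ → ℂ :=
  fun x y z => deriv (fun s => U s y z) x

/-- Partial derivative in the second variable. -/
noncomputable def pdy (U : ℝ → ℝ → ℝ → ℂ) : ℝ → ℝ → ℝ → ℂ :=
  fun x y z => deriv (fun s => U x s z) y

/-- Partial derivative in the third variable. -/
noncomputable def pdz (U : ℝ → ℝ → ℝ → ℂ) : ℝ → ℝ → ℝ → ℂ :=
  fun x y z => deriv (fun s => U x y s) z

/-- The three-dimensional biharmonic operator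
`Δ²U = U_xxxx + U_yyyy + U_zzzz + 2U_xxyy + 2U_xxzz + 2U_yyzz`. -/
noncomputable def biharm (U : ℝ → ℝ → ℝ → ℂ) : ℝ → ℝ → ℝ → ℂ :=
  fun x y z =>
    pdx (pdx (pdx (pdx U))) x y z + pdy (pdy (pdy (pdy U))) x y z +
      pdz (pdz (pdz (pdz U))) x y z +
      2 * pdx (pdx (pdy (pdy U))) x y z +
      2 * pdx (pdx (pdz (pdz U))) x y z +
      2 * pdy (pdy (pdz (pdz U))) x y z

lemma hasDerivAt_iterate_deriv {D : Set ℂ} (hD : IsOpen D) {F : ℂ → ℂ}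
    (hF : DifferentiableOn ℂ F D) (n : ℕ) {w : ℂ} (hw : w ∈ D) :
    HasDerivAt (deriv^[n] F) (deriv^[n + 1] F w) w := by
  have hdiff := ((hF.analyticOnNhd hD).iterated_deriv n w hw).differentiableAt
  rw [Function.iterate_succ_apply']
  exact hdiff.hasDerivAt

lemma deriv_eq_of_eqOn_line {D : Set ℂ} (hD : IsOpen D) {F : ℂ → ℂ}
    (hF : DifferentiableOn ℂ F D) {Q : ℝ → ℂ} {a A u v c d : ℂ} {n : ℕ}
    (hQ : ∀ s : ℝ, a * s + u ∈ D →
      Q s = c * deriv^[n] F (a * s + u) + d * (A * s + v) * deriv^[n + 1] F (a * s + u))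
    {t : ℝ} (ht : a * t + u ∈ D) :
    deriv Q t = (c * a + d * A) * deriv^[n + 1] F (a * t + u) +
      d * a * (A * t + v) * deriv^[n + 2] F (a * t + u) := by
  have hline : ∀ b w : ℂ, HasDerivAt (fun s : ℝ => b * s + w) b t := fun b w => by
    simpa using ((hasDerivAt_id (t : ℂ)).const_mul b |>.add_const w).comp_ofReal
  have h₀ := (hasDerivAt_iterate_deriv hD hF n ht).comp t (hline a u)
  have h₁ := (hasDerivAt_iterate_deriv hD hF (n + 1) ht).comp t (hline a u)
  have hmodel := (h₀.const_mul c).add (((hline A v).const_mul d).mul h₁)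
  have hnear : Q =ᶠ[nhds t] fun s : ℝ =>
      c * deriv^[n] F (a * s + u) + d * (A * s + v) * deriv^[n + 1] F (a * s + u) := by
    have hopen : IsOpen {s : ℝ | a * s + u ∈ D} := hD.preimage (by fun_prop)
    filter_upwards [hopen.mem_nhds ht] with s hs using hQ s hs
  rw [hnear.deriv_eq]
  exact (hmodel.congr_deriv (by simp only [Function.comp_apply]; ring)).deriv

noncomputable def waveForm (F : ℂ → ℂ) (k m g : ℕ → ℂ) (c d : ℂ) (n : ℕ) : ℝ → ℝ → ℝ → ℂ :=
  fun x y z => c * deriv^[n] F (k 0 * x + m 0 * y + g 0 * z) +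
    d * (k 1 * x + m 1 * y + g 1 * z) * deriv^[n + 1] F (k 0 * x + m 0 * y + g 0 * z)

section PartialDerivatives

variable {D : Set ℂ} (hD : IsOpen D) {F : ℂ → ℂ} (hF : DifferentiableOn ℂ F D)
  {k m g : ℕ → ℂ} {Q : ℝ → ℝ → ℝ → ℂ} {c d : ℂ} {n : ℕ}
include hD hF

lemma pdx_eq_waveForm (hQ : ∀ x y z : ℝ, k 0 * x + m 0 * y + g 0 * z ∈ D →
      Q x y z = waveForm F k m g c d n x y z)
    (x y z : ℝ) (h : k 0 * x + m 0 * y + g 0 * z ∈ D) :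
    pdx Q x y z = waveForm F k m g (c * k 0 + d * k 1) (d * k 0) (n + 1) x y z := by
  have hline := deriv_eq_of_eqOn_line hD hF (Q := fun s => Q s y z) (a := k 0) (A := k 1)
    (u := m 0 * y + g 0 * z) (v := m 1 * y + g 1 * z) (c := c) (d := d) (n := n) (t := x)
    (fun s hs => by rw [hQ s y z (by rwa [add_assoc])]; simp only [waveForm, add_assoc])
    (by rwa [← add_assoc])
  rw [pdx, hline]
  simp only [waveForm, add_assoc]

lemma pdy_eq_waveForm (hQ : ∀ x y z : ℝ, k 0 * x + m 0 * y + g 0 * z ∈ D →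
      Q x y z = waveForm F k m g c d n x y z)
    (x y z : ℝ) (h : k 0 * x + m 0 * y + g 0 * z ∈ D) :
    pdy Q x y z = waveForm F k m g (c * m 0 + d * m 1) (d * m 0) (n + 1) x y z := by
  have hline := deriv_eq_of_eqOn_line hD hF (Q := fun s => Q x s z) (a := m 0) (A := m 1)
    (u := k 0 * x + g 0 * z) (v := k 1 * x + g 1 * z) (c := c) (d := d) (n := n) (t := y)
    (fun s hs => by rw [hQ x s z (by convert hs using 1; ring)]; simp only [waveForm]; ring_nf)
    (by convert h using 1; ring)
  rw [pdy, hline]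
  simp only [waveForm]
  ring_nf

lemma pdz_eq_waveForm (hQ : ∀ x y z : ℝ, k 0 * x + m 0 * y + g 0 * z ∈ D →
      Q x y z = waveForm F k m g c d n x y z)
    (x y z : ℝ) (h : k 0 * x + m 0 * y + g 0 * z ∈ D) :
    pdz Q x y z = waveForm F k m g (c * g 0 + d * g 1) (d * g 0) (n + 1) x y z := by
  have hline := deriv_eq_of_eqOn_line hD hF (Q := fun s => Q x y s) (a := g 0) (A := g 1)
    (u := k 0 * x + m 0 * y) (v := k 1 * x + m 1 * y) (c := c) (d := d) (n := n) (t := z)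
    (fun s hs => by rw [hQ x y s (by convert hs using 1; ring)]; simp only [waveForm]; ring_nf)
    (by convert h using 1; ring)
  rw [pdz, hline]
  simp only [waveForm]
  ring_nf

lemma biharm_eq_waveForm (hQ : ∀ x y z : ℝ, k 0 * x + m 0 * y + g 0 * z ∈ D →
      Q x y z = waveForm F k m g c d n x y z)
    {x y z : ℝ} (h : k 0 * x + m 0 * y + g 0 * z ∈ D) :
    biharm Q x y z =
      waveForm F k m g
        ((k 0 ^ 2 + m 0 ^ 2 + g 0 ^ 2) ^ 2 * c +
          4 * (k 0 ^ 2 + m 0 ^ 2 + g 0 ^ 2) * (k 0 * k 1 + m 0 * m 1 + g 0 * g 1) * d)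
        ((k 0 ^ 2 + m 0 ^ 2 + g 0 ^ 2) ^ 2 * d) (n + 4) x y z := by
  have hxxxx := pdx_eq_waveForm hD hF (pdx_eq_waveForm hD hF (pdx_eq_waveForm hD hF
    (pdx_eq_waveForm hD hF hQ))) x y z h
  have hyyyy := pdy_eq_waveForm hD hF (pdy_eq_waveForm hD hF (pdy_eq_waveForm hD hF
    (pdy_eq_waveForm hD hF hQ))) x y z h
  have hzzzz := pdz_eq_waveForm hD hF (pdz_eq_waveForm hD hF (pdz_eq_waveForm hD hF
    (pdz_eq_waveForm hD hF hQ))) x y z h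
  have hxxyy := pdx_eq_waveForm hD hF (pdx_eq_waveForm hD hF (pdy_eq_waveForm hD hF
    (pdy_eq_waveForm hD hF hQ))) x y z h
  have hxxzz := pdx_eq_waveForm hD hF (pdx_eq_waveForm hD hF (pdz_eq_waveForm hD hF
    (pdz_eq_waveForm hD hF hQ))) x y z h
  have hyyzz := pdy_eq_waveForm hD hF (pdy_eq_waveForm hD hF (pdz_eq_waveForm hD hF
    (pdz_eq_waveForm hD hF hQ))) x y z h
  simp only [biharm]
  rw [hxxxx, hyyyy, hzzzz, hxxyy, hxxzz, hyyzz]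
  simp only [waveForm]
  ring

end PartialDerivatives

lemma coeff_zero_sq_add_sq_add_sq_sq {R : Type*} [CommSemiring R] (p q w : R[X]) :
    ((p ^ 2 + q ^ 2 + w ^ 2) ^ 2).coeff 0 =
      (p.coeff 0 ^ 2 + q.coeff 0 ^ 2 + w.coeff 0 ^ 2) ^ 2 := by
  simp [coeff_zero_eq_eval_zero]

/-- If the coefficients of `X^r`, `r = 0, 1`, in `(p² + q² + w²)²` vanish (with `p, q, w` the degree-1 polynomials with coefficients `k, m, g`) and `F` is holomorphic on the open set `D`, then `U₁ = ξ₁·F′(ξ₀)` satisfies `Δ²U₁ = 0` on `Π`. -/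
theorem biharmonic_U1 (k m g : ℕ → ℂ)
    (hcoef : ∀ r < 2,
      (((∑ r ∈ Finset.range 2, C (k r) * X ^ r) ^ 2 +
          (∑ r ∈ Finset.range 2, C (m r) * X ^ r) ^ 2 +
          (∑ r ∈ Finset.range 2, C (g r) * X ^ r) ^ 2) ^ 2 : Polynomial ℂ).coeff r = 0)
    (D : Set ℂ) (hD : IsOpen D) (F : ℂ → ℂ) (hF : DifferentiableOn ℂ F D)
    (x y z : ℝ) (hmem : k 0 * (x : ℂ) + m 0 * (y : ℂ) + g 0 * (z : ℂ) ∈ D) :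
    biharm (fun x y z =>
      (k 1 * (x : ℂ) + m 1 * (y : ℂ) + g 1 * (z : ℂ)) * deriv F (k 0 * (x : ℂ) + m 0 * (y : ℂ) + g 0 * (z : ℂ))) x y z = 0 := by
  have hnull : k 0 ^ 2 + m 0 ^ 2 + g 0 ^ 2 = 0 := by
    have h0 := hcoef 0 two_pos
    rw [coeff_zero_sq_add_sq_add_sq_sq] at h0
    simpa [Finset.sum_range_succ] using h0
  rw [biharm_eq_waveForm hD hF (c := 0) (d := 1) (n := 0) (fun x y z _ => by simp [waveForm])
    hmem, hnull]
  simp [waveForm]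
end

section
/- Let k_r, m_r, g_r ∈ ℂ for r = 0, 1, 2 and set p(X) = Σ_{r=0}^{2} k_rX^r, q(X) = Σ_{r=0}^{2} m_rX^r, w(X) = Σ_{r=0}^{2} g_rX^r. Assume the coefficient of X^r in (p² + q² + w²)² vanishes for r = 0, 1, 2. Let D ⊆ ℂ be open, F : ℂ → ℂ holomorphic on D, ξ_r(x,y,z) = k_r x + m_r y + g_r z, and Π = {(x,y,z) ∈ ℝ³ : ξ₀(x,y,z) ∈ D}. Then the function U₂ = ξ₂·F′(ξ₀) + (ξ₁²/2)·F″(ξ₀) satisfies the three-dimensional biharmonic equation Δ²U₂ = 0 at every point of Π. -/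
/-!
Every partial derivative of `(a + b ξ₁ + c ξ₂ + d ξ₁²) F⁽ⁿ⁾(ξ₀)` is a sum of two functions of the
same shape: `∂ₓ` differentiates the prefactor using `∂ₓξⱼ = kⱼ` and turns `F⁽ⁿ⁾(ξ₀)` into
`k₀ F⁽ⁿ⁺¹⁾(ξ₀)`. Expanding the six fourth-order derivatives of `U₂` in this way gives, with
`aⱼ = (kⱼ, mⱼ, gⱼ)`, `A = a₀·a₀` and `B = a₀·a₁`,
`Δ²U₂ = A²(ξ₁²/2 F⁽⁶⁾ + ξ₂ F⁽⁵⁾) + 4ABξ₁F⁽⁵⁾ + A(4 a₀·a₂ + 2 a₁·a₁)F⁽⁴⁾ + 4B²F⁽⁴⁾`.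
The coefficients of `X⁰` and `X²` in `(p² + q² + w²)²` are `A²` and `2A(…) + 4B²`, so `A = B = 0`.
-/

open Polynomial

open Topology

theorem DifferentiableOn.hasDerivAt_iteratedDeriv {F : ℂ → ℂ} {D : Set ℂ}
    (hF : DifferentiableOn ℂ F D) (hD : IsOpen D) (n : ℕ) {w : ℂ} (hw : w ∈ D) :
    HasDerivAt (iteratedDeriv n F) (iteratedDeriv (n + 1) F w) w := by
  rw [iteratedDeriv_succ, iteratedDeriv_eq_iterate]
  exact ((hF.analyticOnNhd hD).iterated_deriv n w hw).differentiableAt.hasDerivAt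

theorem Polynomial.coeff_sq_zero {R : Type*} [CommRing R] (p : R[X]) :
    (p ^ 2).coeff 0 = p.coeff 0 ^ 2 := by
  rw [pow_two, mul_coeff_zero, pow_two]

theorem Polynomial.coeff_sq_one {R : Type*} [CommRing R] (p : R[X]) :
    (p ^ 2).coeff 1 = 2 * p.coeff 0 * p.coeff 1 := by
  rw [pow_two, coeff_mul, Finset.Nat.sum_antidiagonal_eq_sum_range_succ_mk]
  simp only [Finset.sum_range_succ, Finset.range_one, Finset.sum_singleton, tsub_zero, tsub_self]
  ring

theorem Polynomial.coeff_zero_eq_zero_and_coeff_one_eq_zero_of_sq {R : Type*} [CommRing R]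
    [NoZeroDivisors R] {P : R[X]} (h0 : (P ^ 2).coeff 0 = 0) (h2 : (P ^ 2).coeff 2 = 0) :
    P.coeff 0 = 0 ∧ P.coeff 1 = 0 := by
  have hP0 : P.coeff 0 = 0 := by rwa [coeff_sq_zero, sq_eq_zero_iff] at h0
  refine ⟨hP0, ?_⟩
  rw [pow_two, coeff_mul, Finset.Nat.sum_antidiagonal_eq_sum_range_succ_mk] at h2
  simpa [Finset.sum_range_succ, hP0] using h2

theorem sq_add_sq_add_sq_eq_zero_and_mul_add_mul_add_mul_eq_zero (k m g : ℕ → ℂ)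
    (hcoef : ∀ r < 3,
      (((∑ r ∈ Finset.range 3, C (k r) * X ^ r) ^ 2 +
          (∑ r ∈ Finset.range 3, C (m r) * X ^ r) ^ 2 +
          (∑ r ∈ Finset.range 3, C (g r) * X ^ r) ^ 2) ^ 2 : ℂ[X]).coeff r = 0) :
    k 0 ^ 2 + m 0 ^ 2 + g 0 ^ 2 = 0 ∧ k 0 * k 1 + m 0 * m 1 + g 0 * g 1 = 0 := by
  obtain ⟨h0, h1⟩ := coeff_zero_eq_zero_and_coeff_one_eq_zero_of_sq (hcoef 0 (by norm_num))
    (hcoef 2 (by norm_num))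
  simp only [coeff_add, coeff_sq_zero, coeff_sq_one, finsetSum_coeff, coeff_C_mul_X_pow] at h0 h1
  simp only [Finset.sum_ite_eq, Finset.mem_range, Nat.ofNat_pos, Nat.one_lt_ofNat, ↓reduceIte]
    at h0 h1
  refine ⟨h0, ?_⟩
  linear_combination h1 / 2

/-- `⟨n, a, b, c, d⟩` stands for `(a + b ξ₁ + c ξ₂ + d ξ₁²) F⁽ⁿ⁾(ξ₀)`. -/
structure XiTerm where
  order : ℕ
  a : ℂ
  b : ℂ
  c : ℂ
  d : ℂ

namespace XiTerm

variable (F : ℂ → ℂ)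

noncomputable def eval (w₀ w₁ w₂ : ℂ) (t : XiTerm) : ℂ :=
  (t.a + t.b * w₁ + t.c * w₂ + t.d * w₁ ^ 2) * iteratedDeriv t.order F w₀

/-- The derivative of `t` along a line on which `ξⱼ` has slope `u j`. -/
def derivAlong (u : ℕ → ℂ) (t : XiTerm) : List XiTerm :=
  [⟨t.order, t.b * u 1 + t.c * u 2, 2 * t.d * u 1, 0, 0⟩,
   ⟨t.order + 1, u 0 * t.a, u 0 * t.b, u 0 * t.c, u 0 * t.d⟩]

noncomputable def evalList (w₀ w₁ w₂ : ℂ) (L : List XiTerm) : ℂ :=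
  (L.map (eval F w₀ w₁ w₂)).sum

def derivAlongList (u : ℕ → ℂ) (L : List XiTerm) : List XiTerm :=
  L.flatMap (derivAlong u)

variable {F} {w : ℕ → ℝ → ℂ} {u : ℕ → ℂ} {s : ℝ}

theorem hasDerivAt_eval (t : XiTerm)
    (hF : HasDerivAt (iteratedDeriv t.order F) (iteratedDeriv (t.order + 1) F (w 0 s)) (w 0 s))
    (hw : ∀ j, HasDerivAt (w j) (u j) s) :
    HasDerivAt (fun s => t.eval F (w 0 s) (w 1 s) (w 2 s))
      (evalList F (w 0 s) (w 1 s) (w 2 s) (t.derivAlong u)) s := by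
  have hcoeff := ((((hw 1).const_mul t.b).const_add t.a).add ((hw 2).const_mul t.c)).add
    (((hw 1).pow 2).const_mul t.d)
  refine (hcoeff.mul (hF.comp s (hw 0))).congr_deriv ?_
  simp only [evalList, derivAlong, eval, List.map_cons, List.map_nil, List.sum_cons, List.sum_nil,
    Function.comp_apply, Pi.add_apply, Pi.pow_apply, Nat.cast_ofNat, Nat.add_one_sub_one, pow_one]
  ring

theorem hasDerivAt_evalList (L : List XiTerm)
    (hF : ∀ n, HasDerivAt (iteratedDeriv n F) (iteratedDeriv (n + 1) F (w 0 s)) (w 0 s))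
    (hw : ∀ j, HasDerivAt (w j) (u j) s) :
    HasDerivAt (fun s => evalList F (w 0 s) (w 1 s) (w 2 s) L)
      (evalList F (w 0 s) (w 1 s) (w 2 s) (derivAlongList u L)) s := by
  induction L with
  | nil => simpa [evalList, derivAlongList] using hasDerivAt_const s (0 : ℂ)
  | cons t L ih =>
    refine ((t.hasDerivAt_eval (hF _) hw).add ih).congr_deriv ?_
    simp [evalList, derivAlongList]

theorem deriv_eq_evalList_derivAlongList {D : Set ℂ} (hD : IsOpen D)
    (hF : ∀ n, ∀ z ∈ D, HasDerivAt (iteratedDeriv n F) (iteratedDeriv (n + 1) F z) z)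
    {f : ℝ → ℂ} {L : List XiTerm}
    (hf : ∀ t, w 0 t ∈ D → f t = evalList F (w 0 t) (w 1 t) (w 2 t) L)
    (hw : ∀ j, HasDerivAt (w j) (u j) s) (hs : w 0 s ∈ D) :
    deriv f s = evalList F (w 0 s) (w 1 s) (w 2 s) (derivAlongList u L) := by
  have hfL : f =ᶠ[𝓝 s] fun t => evalList F (w 0 t) (w 1 t) (w 2 t) L :=
    Filter.mem_of_superset ((hw 0).continuousAt.preimage_mem_nhds (hD.mem_nhds hs)) hf
  exact ((hasDerivAt_evalList L (fun n => hF n _ hs) hw).congr_of_eventuallyEq hfL).deriv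

noncomputable def evalBiharm (k m g : ℕ → ℂ) (F : ℂ → ℂ) (w₀ w₁ w₂ : ℂ) (L : List XiTerm) : ℂ :=
  let E := evalList F w₀ w₁ w₂
  let dx := derivAlongList k
  let dy := derivAlongList m
  let dz := derivAlongList g
  E (dx^[4] L) + E (dy^[4] L) + E (dz^[4] L) + 2 * E (dx^[2] (dy^[2] L)) +
    2 * E (dx^[2] (dz^[2] L)) + 2 * E (dy^[2] (dz^[2] L))

end XiTerm

def xi (k m g : ℕ → ℂ) (j : ℕ) (x y z : ℝ) : ℂ := k j * x + m j * y + g j * z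

section XiExpansion

variable (k m g : ℕ → ℂ) (j : ℕ) (x y z : ℝ)

theorem hasDerivAt_xi_fst : HasDerivAt (fun s => xi k m g j s y z) (k j) x := by
  simpa [xi] using
    (((hasDerivAt_id x).ofReal_comp.const_mul (k j)).add_const (m j * y)).add_const (g j * z)

theorem hasDerivAt_xi_snd : HasDerivAt (fun s => xi k m g j x s z) (m j) y := by
  simpa [xi] using
    (((hasDerivAt_id y).ofReal_comp.const_mul (m j)).const_add (k j * x)).add_const (g j * z)

theorem hasDerivAt_xi_thd : HasDerivAt (fun s => xi k m g j x y s) (g j) z := by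
  simpa [xi] using
    ((hasDerivAt_id z).ofReal_comp.const_mul (g j)).const_add (k j * x + m j * y)

end XiExpansion

def IsXiExpansion (k m g : ℕ → ℂ) (D : Set ℂ) (F : ℂ → ℂ) (L : List XiTerm)
    (U : ℝ → ℝ → ℝ → ℂ) : Prop :=
  ∀ x y z, xi k m g 0 x y z ∈ D →
    U x y z = XiTerm.evalList F (xi k m g 0 x y z) (xi k m g 1 x y z) (xi k m g 2 x y z) L

namespace IsXiExpansion

variable {k m g : ℕ → ℂ} {D : Set ℂ} {F : ℂ → ℂ} {L : List XiTerm} {U : ℝ → ℝ → ℝ → ℂ}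

theorem pdx (hD : IsOpen D)
    (hF : ∀ n, ∀ z ∈ D, HasDerivAt (iteratedDeriv n F) (iteratedDeriv (n + 1) F z) z)
    (hU : IsXiExpansion k m g D F L U) :
    IsXiExpansion k m g D F (XiTerm.derivAlongList k L) (pdx U) := fun x y z hs =>
  XiTerm.deriv_eq_evalList_derivAlongList (w := fun j s => xi k m g j s y z) hD hF
    (fun s => hU s y z) (fun j => hasDerivAt_xi_fst k m g j x y z) hs

theorem pdy (hD : IsOpen D)
    (hF : ∀ n, ∀ z ∈ D, HasDerivAt (iteratedDeriv n F) (iteratedDeriv (n + 1) F z) z)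
    (hU : IsXiExpansion k m g D F L U) :
    IsXiExpansion k m g D F (XiTerm.derivAlongList m L) (pdy U) := fun x y z hs =>
  XiTerm.deriv_eq_evalList_derivAlongList (w := fun j s => xi k m g j x s z) hD hF
    (fun s => hU x s z) (fun j => hasDerivAt_xi_snd k m g j x y z) hs

theorem pdz (hD : IsOpen D)
    (hF : ∀ n, ∀ z ∈ D, HasDerivAt (iteratedDeriv n F) (iteratedDeriv (n + 1) F z) z)
    (hU : IsXiExpansion k m g D F L U) :
    IsXiExpansion k m g D F (XiTerm.derivAlongList g L) (pdz U) := fun x y z hs =>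
  XiTerm.deriv_eq_evalList_derivAlongList (w := fun j s => xi k m g j x y s) hD hF
    (fun s => hU x y s) (fun j => hasDerivAt_xi_thd k m g j x y z) hs

theorem biharm_eq (hD : IsOpen D)
    (hF : ∀ n, ∀ z ∈ D, HasDerivAt (iteratedDeriv n F) (iteratedDeriv (n + 1) F z) z)
    (hU : IsXiExpansion k m g D F L U) {x y z : ℝ} (hs : xi k m g 0 x y z ∈ D) :
    biharm U x y z =
      XiTerm.evalBiharm k m g F (xi k m g 0 x y z) (xi k m g 1 x y z) (xi k m g 2 x y z) L := by
  have hx := hU.pdx hD hF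
  have hy := hU.pdy hD hF
  have hz := hU.pdz hD hF
  rw [biharm, (hx.pdx hD hF |>.pdx hD hF |>.pdx hD hF) x y z hs,
    (hy.pdy hD hF |>.pdy hD hF |>.pdy hD hF) x y z hs,
    (hz.pdz hD hF |>.pdz hD hF |>.pdz hD hF) x y z hs,
    (hy.pdy hD hF |>.pdx hD hF |>.pdx hD hF) x y z hs,
    (hz.pdz hD hF |>.pdx hD hF |>.pdx hD hF) x y z hs,
    (hz.pdz hD hF |>.pdy hD hF |>.pdy hD hF) x y z hs]
  rfl

end IsXiExpansion

noncomputable def u2Expansion : List XiTerm := [⟨1, 0, 0, 1, 0⟩, ⟨2, 0, 0, 0, 1 / 2⟩]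

theorem isXiExpansion_u2Expansion (k m g : ℕ → ℂ) (D : Set ℂ) (F : ℂ → ℂ) :
    IsXiExpansion k m g D F u2Expansion fun x y z =>
      xi k m g 2 x y z * deriv F (xi k m g 0 x y z) +
        xi k m g 1 x y z ^ 2 / 2 * iteratedDeriv 2 F (xi k m g 0 x y z) := by
  intro x y z _
  simp only [u2Expansion, XiTerm.evalList, XiTerm.eval, iteratedDeriv_one, List.map_cons,
    List.map_nil, List.sum_cons, List.sum_nil]
  ring

theorem evalBiharm_u2Expansion (k m g : ℕ → ℂ) (F : ℂ → ℂ) (w₀ w₁ w₂ : ℂ) :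
    XiTerm.evalBiharm k m g F w₀ w₁ w₂ u2Expansion =
    (k 0 ^ 2 + m 0 ^ 2 + g 0 ^ 2) ^ 2 * (w₁ ^ 2 / 2 * iteratedDeriv 6 F w₀
        + w₂ * iteratedDeriv 5 F w₀)
      + 4 * (k 0 ^ 2 + m 0 ^ 2 + g 0 ^ 2) * (k 0 * k 1 + m 0 * m 1 + g 0 * g 1)
        * w₁ * iteratedDeriv 5 F w₀
      + (k 0 ^ 2 + m 0 ^ 2 + g 0 ^ 2)
        * (4 * (k 0 * k 2 + m 0 * m 2 + g 0 * g 2) + 2 * (k 1 ^ 2 + m 1 ^ 2 + g 1 ^ 2))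
        * iteratedDeriv 4 F w₀
      + 4 * (k 0 * k 1 + m 0 * m 1 + g 0 * g 1) ^ 2 * iteratedDeriv 4 F w₀ := by
  simp only [XiTerm.evalBiharm, u2Expansion, XiTerm.evalList, XiTerm.derivAlongList,
    XiTerm.derivAlong, XiTerm.eval, Function.iterate_succ, Function.iterate_zero,
    Function.comp_apply, id, List.flatMap_cons, List.flatMap_nil, List.cons_append,
    List.nil_append, List.map_cons, List.map_nil, List.sum_cons, List.sum_nil]
  ring

/-- If the coefficients of `X^r`, `r = 0, 1, 2`, in `(p² + q² + w²)²` vanish and `F` is holomorphic on the open set `D`, then `U₂ = ξ₂·F′(ξ₀) + (ξ₁²/2)·F″(ξ₀)` satisfies `Δ²U₂ = 0` on `Π`. -/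
theorem biharmonic_U2 (k m g : ℕ → ℂ)
    (hcoef : ∀ r < 3,
      (((∑ r ∈ Finset.range 3, C (k r) * X ^ r) ^ 2 +
          (∑ r ∈ Finset.range 3, C (m r) * X ^ r) ^ 2 +
          (∑ r ∈ Finset.range 3, C (g r) * X ^ r) ^ 2) ^ 2 : Polynomial ℂ).coeff r = 0)
    (D : Set ℂ) (hD : IsOpen D) (F : ℂ → ℂ) (hF : DifferentiableOn ℂ F D)
    (x y z : ℝ) (hmem : k 0 * (x : ℂ) + m 0 * (y : ℂ) + g 0 * (z : ℂ) ∈ D) :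
    biharm (fun x y z =>
      (k 2 * (x : ℂ) + m 2 * (y : ℂ) + g 2 * (z : ℂ)) * deriv F (k 0 * (x : ℂ) + m 0 * (y : ℂ) + g 0 * (z : ℂ)) +
      (k 1 * (x : ℂ) + m 1 * (y : ℂ) + g 1 * (z : ℂ)) ^ 2 / 2 * iteratedDeriv 2 F (k 0 * (x : ℂ) + m 0 * (y : ℂ) + g 0 * (z : ℂ))) x y z = 0 := by
  obtain ⟨hA, hB⟩ := sq_add_sq_add_sq_eq_zero_and_mul_add_mul_add_mul_eq_zero k m g hcoef
  refine ((isXiExpansion_u2Expansion k m g D F).biharm_eq hD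
    (fun n _ hz => hF.hasDerivAt_iteratedDeriv hD n hz) hmem).trans ?_
  rw [evalBiharm_u2Expansion, hA, hB]
  ring
end

section
/- Let k_r, m_r, g_r ∈ ℂ for r = 0, …, 3 and set p(X) = Σ_{r=0}^{3} k_rX^r, q(X) = Σ_{r=0}^{3} m_rX^r, w(X) = Σ_{r=0}^{3} g_rX^r. Assume the coefficient of X^r in (p² + q² + w²)² vanishes for r = 0, 1, 2, 3. Let D ⊆ ℂ be open, F : ℂ → ℂ holomorphic on D, ξ_r(x,y,z) = k_r x + m_r y + g_r z, and Π = {(x,y,z) ∈ ℝ³ : ξ₀(x,y,z) ∈ D}. Then the function U₃ = ξ₃·F′(ξ₀) + ξ₁ξ₂·F″(ξ₀) + (ξ₁³/3!)·F‴(ξ₀) satisfies the three-dimensional biharmonic equation Δ²U₃ = 0 at every point of Π. -/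
open Polynomial

/-!
Every partial derivative of a polynomial in the `ξ_r` and the `F⁽ⁿ⁾(ξ₀)` is again such a
polynomial: `∂ₓ` acts on it as the derivation `ξ_r ↦ k_r`, `F⁽ⁿ⁾(ξ₀) ↦ k₀ F⁽ⁿ⁺¹⁾(ξ₀)`, and
similarly for `∂_y`, `∂_z` with `m`, `g`. These derivations commute, so `Δ²` becomes `Λ²` for
the formal Laplacian `Λ`. Writing `⟨a, b⟩ = k_a k_b + m_a m_b + g_a g_b`, the polynomial
`s = p² + q² + w²` has coefficients `s₀ = ⟨0, 0⟩` and `s₁ = 2⟨0, 1⟩`, and the hypothesis says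
`X⁴ ∣ s²`, i.e. `s₀ = s₁ = 0`. Then `ΛU₃ = s₂ ξ₁ F‴(ξ₀) + s₃ F″(ξ₀)`, and `Λ` kills both
`ξ₁ F‴(ξ₀)` (giving `2⟨0, 1⟩ F⁗ + ⟨0, 0⟩ ξ₁ F⁽⁵⁾`) and `F″(ξ₀)` (giving `⟨0, 0⟩ F⁗`).
-/

theorem Polynomial.coeff_eq_zero_of_coeff_sq_eq_zero {K : Type*} [Field K] {S : K[X]} {n : ℕ}
    (h : ∀ r < 2 * n, (S ^ 2).coeff r = 0) : ∀ r < n, S.coeff r = 0 := by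
  rw [← X_pow_dvd_iff, ← IsIntegrallyClosed.pow_dvd_pow_iff two_ne_zero, ← pow_mul, mul_comm]
  exact X_pow_dvd_iff.mpr h

theorem isotropy_of_coeff_sumSq_sq (k m g : ℕ → ℂ)
    (hcoef : ∀ r < 4,
      (((∑ r ∈ Finset.range 4, C (k r) * X ^ r) ^ 2 +
          (∑ r ∈ Finset.range 4, C (m r) * X ^ r) ^ 2 +
          (∑ r ∈ Finset.range 4, C (g r) * X ^ r) ^ 2) ^ 2 : ℂ[X]).coeff r = 0) :
    k 0 ^ 2 + m 0 ^ 2 + g 0 ^ 2 = 0 ∧ k 0 * k 1 + m 0 * m 1 + g 0 * g 1 = 0 := by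
  have hs := coeff_eq_zero_of_coeff_sq_eq_zero (n := 2) hcoef
  refine ⟨by simpa [sq, coeff_mul, Finset.sum_range_succ, coeff_X_pow] using hs 0 two_pos, ?_⟩
  have hs₁ : k 0 * k 1 + k 1 * k 0 + (m 0 * m 1 + m 1 * m 0) + (g 0 * g 1 + g 1 * g 0) = 0 := by
    simpa [sq, coeff_mul, Finset.sum_range_succ, coeff_X_pow, Finset.Nat.antidiagonal_succ]
      using hs 1 one_lt_two
  linear_combination hs₁ / 2

namespace Jet

abbrev Poly := MvPolynomial (ℕ ⊕ ℕ) ℂ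

/-- The variable standing for `ξ_r`. -/
noncomputable abbrev ξ (r : ℕ) : Poly := MvPolynomial.X (.inl r)

/-- The variable standing for `F⁽ⁿ⁾(ξ₀)`. -/
noncomputable abbrev φ (n : ℕ) : Poly := MvPolynomial.X (.inr n)

/-- `d/dt` along a path on which `ξ_r' = c r`; by the chain rule `F⁽ⁿ⁾(ξ₀)' = c 0 · F⁽ⁿ⁺¹⁾(ξ₀)`. -/
noncomputable def lineDerivation (c : ℕ → ℂ) : Derivation ℂ Poly Poly :=
  MvPolynomial.mkDerivation ℂ <|
    Sum.elim (fun r => MvPolynomial.C (c r)) fun n => MvPolynomial.C (c 0) * φ (n + 1)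

@[simp]
theorem lineDerivation_ξ (c : ℕ → ℂ) (r : ℕ) : lineDerivation c (ξ r) = MvPolynomial.C (c r) := by
  simp [lineDerivation, MvPolynomial.mkDerivation_X]

@[simp]
theorem lineDerivation_φ (c : ℕ → ℂ) (n : ℕ) :
    lineDerivation c (φ n) = MvPolynomial.C (c 0) * φ (n + 1) := by
  simp [lineDerivation, MvPolynomial.mkDerivation_X]

theorem lineDerivation_comm (c c' : ℕ → ℂ) (P : Poly) :
    lineDerivation c (lineDerivation c' P) = lineDerivation c' (lineDerivation c P) := by
  suffices ⁅lineDerivation c, lineDerivation c'⁆ = 0 by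
    simpa [Derivation.commutator_apply, sub_eq_zero] using congrArg (· P) this
  refine MvPolynomial.derivation_ext fun i => ?_
  rcases i with r | n
  · simp [Derivation.commutator_apply]
  · simp only [Derivation.commutator_apply, lineDerivation_φ, Derivation.leibniz, smul_eq_mul,
      MvPolynomial.derivation_C, mul_zero, add_zero, Derivation.coe_zero, Pi.zero_apply]
    ring

noncomputable def jet (F : ℂ → ℂ) (ξ : ℕ → ℂ) : ℕ ⊕ ℕ → ℂ :=
  Sum.elim ξ fun n => iteratedDeriv n F (ξ 0)

section Calculus

variable {F : ℂ → ℂ} {D : Set ℂ}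

theorem hasDerivAt_eval_jet (hD : IsOpen D) (hF : DifferentiableOn ℂ F D)
    {ξ : ℝ → ℕ → ℂ} {c : ℕ → ℂ} {s : ℝ} (hξ : ∀ r, HasDerivAt (fun t => ξ t r) (c r) s)
    (hs : ξ s 0 ∈ D) (P : Poly) :
    HasDerivAt (fun t => MvPolynomial.eval (jet F (ξ t)) P)
      (MvPolynomial.eval (jet F (ξ s)) (lineDerivation c P)) s := by
  induction P using MvPolynomial.induction_on with
  | C a => simpa [lineDerivation] using hasDerivAt_const s a
  | add p q hp hq => simp only [map_add]; exact hp.add hq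
  | mul_X p i hp =>
    have hX : HasDerivAt (fun t => jet F (ξ t) i)
        (MvPolynomial.eval (jet F (ξ s)) (lineDerivation c (MvPolynomial.X i))) s := by
      rcases i with r | n
      · simpa [jet, lineDerivation, MvPolynomial.mkDerivation_X] using hξ r
      · have hn : HasDerivAt (iteratedDeriv n F) (iteratedDeriv (n + 1) F (ξ s 0)) (ξ s 0) := by
          rw [iteratedDeriv_succ, iteratedDeriv_eq_iterate]
          exact ((hF.analyticOnNhd hD).iterated_deriv n _ hs).differentiableAt.hasDerivAt
        simpa [jet, lineDerivation, MvPolynomial.mkDerivation_X, mul_comm, Function.comp_def]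
          using hn.comp s (hξ 0)
    simp only [map_mul, MvPolynomial.eval_X, Derivation.leibniz, smul_eq_mul, map_add]
    exact (hp.mul hX).congr_deriv (by ring)

theorem deriv_eq_eval_lineDerivation (hD : IsOpen D) (hF : DifferentiableOn ℂ F D)
    {ξ : ℝ → ℕ → ℂ} {c : ℕ → ℂ} (hξ : ∀ r t, HasDerivAt (fun t => ξ t r) (c r) t)
    {V : ℝ → ℂ} {P : Poly} (hV : ∀ t, ξ t 0 ∈ D → V t = MvPolynomial.eval (jet F (ξ t)) P)
    {s : ℝ} (hs : ξ s 0 ∈ D) :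
    deriv V s = MvPolynomial.eval (jet F (ξ s)) (lineDerivation c P) := by
  have hopen : IsOpen {t | ξ t 0 ∈ D} :=
    hD.preimage (continuous_iff_continuousAt.mpr fun t => (hξ 0 t).continuousAt)
  have hVP : V =ᶠ[nhds s] fun t => MvPolynomial.eval (jet F (ξ t)) P :=
    Filter.eventuallyEq_of_mem (hopen.mem_nhds hs) hV
  rw [hVP.deriv_eq]
  exact (hasDerivAt_eval_jet hD hF (fun r => hξ r s) hs P).deriv

end Calculus

section Laplacian

variable (k m g : ℕ → ℂ)

noncomputable def laplacian : Poly →ₗ[ℂ] Poly :=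
  (lineDerivation k).toLinearMap ∘ₗ (lineDerivation k).toLinearMap +
    (lineDerivation m).toLinearMap ∘ₗ (lineDerivation m).toLinearMap +
    (lineDerivation g).toLinearMap ∘ₗ (lineDerivation g).toLinearMap

@[simp]
theorem laplacian_apply (P : Poly) :
    laplacian k m g P = lineDerivation k (lineDerivation k P) +
      lineDerivation m (lineDerivation m P) + lineDerivation g (lineDerivation g P) :=
  rfl

theorem laplacian_laplacian (P : Poly) :
    laplacian k m g (laplacian k m g P) =
      lineDerivation k (lineDerivation k (lineDerivation k (lineDerivation k P))) +
      lineDerivation m (lineDerivation m (lineDerivation m (lineDerivation m P))) +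
      lineDerivation g (lineDerivation g (lineDerivation g (lineDerivation g P))) +
      2 * lineDerivation k (lineDerivation k (lineDerivation m (lineDerivation m P))) +
      2 * lineDerivation k (lineDerivation k (lineDerivation g (lineDerivation g P))) +
      2 * lineDerivation m (lineDerivation m (lineDerivation g (lineDerivation g P))) := by
  simp only [laplacian_apply, map_add, lineDerivation_comm m k, lineDerivation_comm g k,
    lineDerivation_comm g m]
  ring

def xi (x y z : ℝ) : ℕ → ℂ := fun r => k r * x + m r * y + g r * z

def RepresentsOn (F : ℂ → ℂ) (D : Set ℂ) (P : Poly) (U : ℝ → ℝ → ℝ → ℂ) : Prop :=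
  ∀ x y z, xi k m g x y z 0 ∈ D → U x y z = MvPolynomial.eval (jet F (xi k m g x y z)) P

variable {k m g} {F : ℂ → ℂ} {D : Set ℂ} {P : Poly} {U : ℝ → ℝ → ℝ → ℂ}

namespace RepresentsOn

theorem pdx (hD : IsOpen D) (hF : DifferentiableOn ℂ F D) (h : RepresentsOn k m g F D P U) :
    RepresentsOn k m g F D (lineDerivation k P) (pdx U) := fun _ y z hxyz =>
  deriv_eq_eval_lineDerivation hD hF (ξ := fun t => xi k m g t y z)
    (fun r t => ((((hasDerivAt_id (t : ℂ)).const_mul (k r)).add_const (m r * y)).add_const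
      (g r * z)).comp_ofReal.congr_deriv (mul_one _))
    (fun t ht => h t y z ht) hxyz

theorem pdy (hD : IsOpen D) (hF : DifferentiableOn ℂ F D) (h : RepresentsOn k m g F D P U) :
    RepresentsOn k m g F D (lineDerivation m P) (pdy U) := fun x _ z hxyz =>
  deriv_eq_eval_lineDerivation hD hF (ξ := fun t => xi k m g x t z)
    (fun r t => ((((hasDerivAt_id (t : ℂ)).const_mul (m r)).const_add (k r * x)).add_const
      (g r * z)).comp_ofReal.congr_deriv (mul_one _))
    (fun t ht => h x t z ht) hxyz

theorem pdz (hD : IsOpen D) (hF : DifferentiableOn ℂ F D) (h : RepresentsOn k m g F D P U) :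
    RepresentsOn k m g F D (lineDerivation g P) (pdz U) := fun x y _ hxyz =>
  deriv_eq_eval_lineDerivation hD hF (ξ := fun t => xi k m g x y t)
    (fun r t => (((hasDerivAt_id (t : ℂ)).const_mul (g r)).const_add
      (k r * x + m r * y)).comp_ofReal.congr_deriv (mul_one _))
    (fun t ht => h x y t ht) hxyz

theorem biharm (hD : IsOpen D) (hF : DifferentiableOn ℂ F D) (h : RepresentsOn k m g F D P U) :
    RepresentsOn k m g F D (laplacian k m g (laplacian k m g P)) (biharm U) := by
  intro x y z hxyz
  have hx := (((h.pdx hD hF).pdx hD hF).pdx hD hF).pdx hD hF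
  have hy := (((h.pdy hD hF).pdy hD hF).pdy hD hF).pdy hD hF
  have hz := (((h.pdz hD hF).pdz hD hF).pdz hD hF).pdz hD hF
  have hxy := (((h.pdy hD hF).pdy hD hF).pdx hD hF).pdx hD hF
  have hxz := (((h.pdz hD hF).pdz hD hF).pdx hD hF).pdx hD hF
  have hyz := (((h.pdz hD hF).pdz hD hF).pdy hD hF).pdy hD hF
  simp only [_root_.biharm, hx x y z hxyz, hy x y z hxyz, hz x y z hxyz, hxy x y z hxyz,
    hxz x y z hxyz, hyz x y z hxyz, laplacian_laplacian, map_add, map_mul, map_ofNat]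

end RepresentsOn

end Laplacian

section Isotropic

variable {k m g : ℕ → ℂ}

theorem laplacian_φ (h00 : k 0 ^ 2 + m 0 ^ 2 + g 0 ^ 2 = 0) (n : ℕ) :
    laplacian k m g (φ n) = 0 := by
  have h00' := congrArg (MvPolynomial.C : ℂ → Poly) h00
  simp only [map_add, map_pow, map_zero] at h00'
  simp only [laplacian_apply, lineDerivation_φ, Derivation.leibniz, MvPolynomial.derivation_C,
    smul_eq_mul]
  linear_combination φ (n + 2) * h00'

theorem laplacian_ξ_one_mul_φ (h00 : k 0 ^ 2 + m 0 ^ 2 + g 0 ^ 2 = 0)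
    (h01 : k 0 * k 1 + m 0 * m 1 + g 0 * g 1 = 0) (n : ℕ) :
    laplacian k m g (ξ 1 * φ n) = 0 := by
  have h00' := congrArg (MvPolynomial.C : ℂ → Poly) h00
  have h01' := congrArg (MvPolynomial.C : ℂ → Poly) h01
  simp only [map_add, map_mul, map_pow, map_zero] at h00' h01'
  simp only [laplacian_apply, lineDerivation_φ, lineDerivation_ξ, Derivation.leibniz,
    MvPolynomial.derivation_C, smul_eq_mul, map_add]
  linear_combination ξ 1 * φ (n + 2) * h00' + 2 * φ (n + 1) * h01'

noncomputable def U₃ : Poly :=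
  ξ 3 * φ 1 + ξ 1 * ξ 2 * φ 2 + MvPolynomial.C (1 / 6) * ξ 1 ^ 3 * φ 3

theorem laplacian_U₃ (h00 : k 0 ^ 2 + m 0 ^ 2 + g 0 ^ 2 = 0)
    (h01 : k 0 * k 1 + m 0 * m 1 + g 0 * g 1 = 0) :
    laplacian k m g U₃ =
      (2 * (k 0 * k 2 + m 0 * m 2 + g 0 * g 2) + (k 1 ^ 2 + m 1 ^ 2 + g 1 ^ 2)) • (ξ 1 * φ 3) +
      (2 * (k 0 * k 3 + m 0 * m 3 + g 0 * g 3) + 2 * (k 1 * k 2 + m 1 * m 2 + g 1 * g 2)) • φ 2 := by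
  have h00' := congrArg (MvPolynomial.C : ℂ → Poly) h00
  have h01' := congrArg (MvPolynomial.C : ℂ → Poly) h01
  -- `ring` treats `C (1 / 6)` as an atom
  have h6 : MvPolynomial.C (1 / 6 : ℂ) * 6 = (1 : Poly) := by
    rw [← map_ofNat MvPolynomial.C 6, ← map_mul]; norm_num
  simp only [map_add, map_mul, map_pow, map_zero] at h00' h01'
  simp only [U₃, laplacian_apply, pow_succ, pow_zero, one_mul, Derivation.leibniz, map_add,
    map_mul, smul_eq_mul, lineDerivation_ξ, lineDerivation_φ, MvPolynomial.derivation_C,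
    map_ofNat, mul_zero, add_zero, zero_add, MvPolynomial.smul_eq_C_mul]
  linear_combination
    (ξ 3 * φ 3 + ξ 1 * ξ 2 * φ 4 + MvPolynomial.C (1 / 6) * ξ 1 ^ 3 * φ 5) * h00' +
    (2 * ξ 2 * φ 3 + ξ 1 ^ 2 * φ 4) * h01' +
    (MvPolynomial.C (k 1) ^ 2 + MvPolynomial.C (m 1) ^ 2 + MvPolynomial.C (g 1) ^ 2) *
      ξ 1 * φ 3 * h6 +
    (MvPolynomial.C (k 0) * MvPolynomial.C (k 1) + MvPolynomial.C (m 0) * MvPolynomial.C (m 1) +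
      MvPolynomial.C (g 0) * MvPolynomial.C (g 1)) * ξ 1 ^ 2 * φ 4 * h6

end Isotropic

end Jet

/-- If the coefficients of `X^r`, `r = 0, …, 3`, in `(p² + q² + w²)²` vanish and `F` is holomorphic on the open set `D`, then `U₃ = ξ₃·F′(ξ₀) + ξ₁ξ₂·F″(ξ₀) + (ξ₁³/3!)·F‴(ξ₀)` satisfies `Δ²U₃ = 0` on `Π`. -/
theorem biharmonic_U3 (k m g : ℕ → ℂ)
    (hcoef : ∀ r < 4,
      (((∑ r ∈ Finset.range 4, C (k r) * X ^ r) ^ 2 +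
          (∑ r ∈ Finset.range 4, C (m r) * X ^ r) ^ 2 +
          (∑ r ∈ Finset.range 4, C (g r) * X ^ r) ^ 2) ^ 2 : Polynomial ℂ).coeff r = 0)
    (D : Set ℂ) (hD : IsOpen D) (F : ℂ → ℂ) (hF : DifferentiableOn ℂ F D)
    (x y z : ℝ) (hmem : k 0 * (x : ℂ) + m 0 * (y : ℂ) + g 0 * (z : ℂ) ∈ D) :
    biharm (fun x y z =>
      (k 3 * (x : ℂ) + m 3 * (y : ℂ) + g 3 * (z : ℂ)) * deriv F (k 0 * (x : ℂ) + m 0 * (y : ℂ) + g 0 * (z : ℂ)) +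
      (k 1 * (x : ℂ) + m 1 * (y : ℂ) + g 1 * (z : ℂ)) * (k 2 * (x : ℂ) + m 2 * (y : ℂ) + g 2 * (z : ℂ)) * iteratedDeriv 2 F (k 0 * (x : ℂ) + m 0 * (y : ℂ) + g 0 * (z : ℂ)) +
      (k 1 * (x : ℂ) + m 1 * (y : ℂ) + g 1 * (z : ℂ)) ^ 3 / 6 * iteratedDeriv 3 F (k 0 * (x : ℂ) + m 0 * (y : ℂ) + g 0 * (z : ℂ))) x y z = 0 := by
  obtain ⟨h00, h01⟩ := isotropy_of_coeff_sumSq_sq k m g hcoef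
  rw [Jet.RepresentsOn.biharm hD hF (P := Jet.U₃) ?_ x y z hmem, Jet.laplacian_U₃ h00 h01, map_add,
    map_smul, map_smul, Jet.laplacian_ξ_one_mul_φ h00 h01, Jet.laplacian_φ h00, smul_zero,
    smul_zero, add_zero, map_zero]
  intro x y z _
  simp only [Jet.U₃, map_add, map_mul, map_pow, MvPolynomial.eval_X, MvPolynomial.eval_C, Jet.jet,
    Sum.elim_inl, Sum.elim_inr, Jet.xi, iteratedDeriv_one]
  ring
end

section
/- Let k₀, m₀, k₁, m₁ ∈ ℂ with k₀² + m₀² ≠ 0, let g₀ = i·(k₀² + m₀²)^{1/2} and g₁ = i·(k₀³k₁ + m₀³m₁)/(2·((k₀² + m₀²)^{1/2})³), where (·)^{1/2} is a fixed complex square root. Then for every entire function F : ℂ → ℂ the function U₁(x,y,z) = (k₁x + m₁y + g₁z)·F(k₀x + m₀y + g₀z) satisfies the three-dimensional biharmonic equation Δ²U₁ = 0 at every point of ℝ³. -/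
/-! Writing `ξ₀ = a·(x,y,z)` and `ξ₁ = b·(x,y,z)`, every partial derivative maps the span of
`F⁽ⁿ⁾(ξ₀)` and `ξ₁ F⁽ⁿ⁺¹⁾(ξ₀)` into the same span with `n` raised by one, acting linearly on the
two coefficients. Tracking the coefficients through the six fourth-order terms gives
`Δ²(ξ₁ F(ξ₀)) = (a·a) (4 (a·b) F'''(ξ₀) + (a·a) ξ₁ F''''(ξ₀))`, which vanishes when `a·a = 0`. -/

noncomputable def linForm (k m g : ℂ) (x y z : ℝ) : ℂ := k * x + m * y + g * z

theorem hasDerivAt_linForm_fst (k m g : ℂ) (x y z : ℝ) :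
    HasDerivAt (fun s => linForm k m g s y z) k x := by
  convert (((hasDerivAt_id (x : ℂ)).const_mul k).add_const (m * y + g * z)).comp_ofReal using 1
  · funext s; simp only [linForm, id]; ring
  · simp

theorem hasDerivAt_linForm_snd (k m g : ℂ) (x y z : ℝ) :
    HasDerivAt (fun s => linForm k m g x s z) m y := by
  convert (((hasDerivAt_id (y : ℂ)).const_mul m).add_const (k * x + g * z)).comp_ofReal using 1
  · funext s; simp only [linForm, id]; ring
  · simp

theorem hasDerivAt_linForm_thd (k m g : ℂ) (x y z : ℝ) :
    HasDerivAt (fun s => linForm k m g x y s) g z := by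
  convert (((hasDerivAt_id (z : ℂ)).const_mul g).add_const (k * x + m * y)).comp_ofReal using 1
  · funext s; simp only [linForm, id]; ring
  · simp

theorem Differentiable.iteratedDeriv {F : ℂ → ℂ}
    (hF : Differentiable ℂ F) (n : ℕ) : Differentiable ℂ (iteratedDeriv n F) :=
  (hF.contDiff (n := ⊤)).differentiable_iteratedDeriv n (WithTop.coe_lt_top _)

theorem hasDerivAt_mul_comp_of_differentiable {u₀ u₁ : ℝ → ℂ} {a₀ a₁ : ℂ} {t : ℝ} {H : ℂ → ℂ}
    (hH : Differentiable ℂ H) (h₀ : HasDerivAt u₀ a₀ t) (h₁ : HasDerivAt u₁ a₁ t) :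
    HasDerivAt (fun s => u₁ s * H (u₀ s)) (a₁ * H (u₀ t) + u₁ t * (deriv H (u₀ t) * a₀)) t :=
  h₁.mul ((hH _).hasDerivAt.comp t h₀)

theorem hasDerivAt_iteratedDeriv_combination {F : ℂ → ℂ} (hF : Differentiable ℂ F) (n : ℕ)
    (q r : ℂ) {u₀ u₁ : ℝ → ℂ} {a₀ a₁ : ℂ} {t : ℝ}
    (h₀ : HasDerivAt u₀ a₀ t) (h₁ : HasDerivAt u₁ a₁ t) :
    HasDerivAt (fun s => q * iteratedDeriv n F (u₀ s) + r * (u₁ s * iteratedDeriv (n + 1) F (u₀ s)))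
      ((q * a₀ + r * a₁) * iteratedDeriv (n + 1) F (u₀ t)
        + r * a₀ * (u₁ t * iteratedDeriv (n + 2) F (u₀ t))) t := by
  have hG := ((hF.iteratedDeriv n _).hasDerivAt.comp t h₀).const_mul q
  have hH := (hasDerivAt_mul_comp_of_differentiable
    (hF.iteratedDeriv (n + 1)) h₀ h₁).const_mul r
  refine (hG.add hH).congr_deriv ?_
  rw [← iteratedDeriv_succ, ← iteratedDeriv_succ]
  ring

section

variable {F : ℂ → ℂ} (hF : Differentiable ℂ F) (k₀ m₀ g₀ k₁ m₁ g₁ : ℂ)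

variable (F) in
noncomputable def iteratedDerivCombination (n : ℕ) (q r : ℂ) : ℝ → ℝ → ℝ → ℂ := fun x y z =>
  q * iteratedDeriv n F (linForm k₀ m₀ g₀ x y z)
    + r * (linForm k₁ m₁ g₁ x y z * iteratedDeriv (n + 1) F (linForm k₀ m₀ g₀ x y z))

include hF

theorem pdx_iteratedDerivCombination (n : ℕ) (q r : ℂ) :
    pdx (iteratedDerivCombination F k₀ m₀ g₀ k₁ m₁ g₁ n q r)
      = iteratedDerivCombination F k₀ m₀ g₀ k₁ m₁ g₁ (n + 1) (q * k₀ + r * k₁) (r * k₀) := by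
  funext x y z
  exact (hasDerivAt_iteratedDeriv_combination hF n q r
    (hasDerivAt_linForm_fst k₀ m₀ g₀ x y z) (hasDerivAt_linForm_fst k₁ m₁ g₁ x y z)).deriv

theorem pdy_iteratedDerivCombination (n : ℕ) (q r : ℂ) :
    pdy (iteratedDerivCombination F k₀ m₀ g₀ k₁ m₁ g₁ n q r)
      = iteratedDerivCombination F k₀ m₀ g₀ k₁ m₁ g₁ (n + 1) (q * m₀ + r * m₁) (r * m₀) := by
  funext x y z
  exact (hasDerivAt_iteratedDeriv_combination hF n q r
    (hasDerivAt_linForm_snd k₀ m₀ g₀ x y z) (hasDerivAt_linForm_snd k₁ m₁ g₁ x y z)).deriv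

theorem pdz_iteratedDerivCombination (n : ℕ) (q r : ℂ) :
    pdz (iteratedDerivCombination F k₀ m₀ g₀ k₁ m₁ g₁ n q r)
      = iteratedDerivCombination F k₀ m₀ g₀ k₁ m₁ g₁ (n + 1) (q * g₀ + r * g₁) (r * g₀) := by
  funext x y z
  exact (hasDerivAt_iteratedDeriv_combination hF n q r
    (hasDerivAt_linForm_thd k₀ m₀ g₀ x y z) (hasDerivAt_linForm_thd k₁ m₁ g₁ x y z)).deriv

theorem pdx_linForm_mul_comp :
    pdx (fun x y z => linForm k₁ m₁ g₁ x y z * F (linForm k₀ m₀ g₀ x y z))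
      = iteratedDerivCombination F k₀ m₀ g₀ k₁ m₁ g₁ 0 k₁ k₀ := by
  funext x y z
  refine (hasDerivAt_mul_comp_of_differentiable hF (hasDerivAt_linForm_fst k₀ m₀ g₀ x y z)
    (hasDerivAt_linForm_fst k₁ m₁ g₁ x y z)).deriv.trans ?_
  simp only [iteratedDerivCombination, zero_add, iteratedDeriv_zero, iteratedDeriv_one]
  ring

theorem pdy_linForm_mul_comp :
    pdy (fun x y z => linForm k₁ m₁ g₁ x y z * F (linForm k₀ m₀ g₀ x y z))
      = iteratedDerivCombination F k₀ m₀ g₀ k₁ m₁ g₁ 0 m₁ m₀ := by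
  funext x y z
  refine (hasDerivAt_mul_comp_of_differentiable hF (hasDerivAt_linForm_snd k₀ m₀ g₀ x y z)
    (hasDerivAt_linForm_snd k₁ m₁ g₁ x y z)).deriv.trans ?_
  simp only [iteratedDerivCombination, zero_add, iteratedDeriv_zero, iteratedDeriv_one]
  ring

theorem pdz_linForm_mul_comp :
    pdz (fun x y z => linForm k₁ m₁ g₁ x y z * F (linForm k₀ m₀ g₀ x y z))
      = iteratedDerivCombination F k₀ m₀ g₀ k₁ m₁ g₁ 0 g₁ g₀ := by
  funext x y z
  refine (hasDerivAt_mul_comp_of_differentiable hF (hasDerivAt_linForm_thd k₀ m₀ g₀ x y z)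
    (hasDerivAt_linForm_thd k₁ m₁ g₁ x y z)).deriv.trans ?_
  simp only [iteratedDerivCombination, zero_add, iteratedDeriv_zero, iteratedDeriv_one]
  ring

theorem biharm_linForm_mul_comp (x y z : ℝ) :
    biharm (fun x y z => linForm k₁ m₁ g₁ x y z * F (linForm k₀ m₀ g₀ x y z)) x y z
      = (k₀ ^ 2 + m₀ ^ 2 + g₀ ^ 2) *
          (4 * (k₀ * k₁ + m₀ * m₁ + g₀ * g₁) * iteratedDeriv 3 F (linForm k₀ m₀ g₀ x y z)
            + (k₀ ^ 2 + m₀ ^ 2 + g₀ ^ 2) *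
              (linForm k₁ m₁ g₁ x y z * iteratedDeriv 4 F (linForm k₀ m₀ g₀ x y z))) := by
  simp only [biharm, pdx_linForm_mul_comp hF, pdy_linForm_mul_comp hF, pdz_linForm_mul_comp hF,
    pdx_iteratedDerivCombination hF, pdy_iteratedDerivCombination hF,
    pdz_iteratedDerivCombination hF, iteratedDerivCombination]
  ring

end

theorem second_exact_solution_general (k₀ m₀ k₁ m₁ s g₀ g₁ : ℂ)
    (hs : s ^ 2 = k₀ ^ 2 + m₀ ^ 2)
    (hg0 : g₀ = Complex.I * s)
    (F : ℂ → ℂ) (hF : Differentiable ℂ F) (x y z : ℝ) :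
    biharm (fun x y z =>
      (k₁ * (x : ℂ) + m₁ * (y : ℂ) + g₁ * (z : ℂ)) *
        F (k₀ * (x : ℂ) + m₀ * (y : ℂ) + g₀ * (z : ℂ))) x y z = 0 := by
  have h_null : k₀ ^ 2 + m₀ ^ 2 + g₀ ^ 2 = 0 := by
    rw [hg0, mul_pow, Complex.I_sq, hs]
    ring
  refine (biharm_linForm_mul_comp hF k₀ m₀ g₀ k₁ m₁ g₁ x y z).trans ?_
  rw [h_null]
  ring

/-- With `k₀² + m₀² ≠ 0`, `s` a fixed complex square root of `k₀² + m₀²`,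
`g₀ = i·s` and `g₁ = i·(k₀³k₁ + m₀³m₁)/(2s³)`, for every entire `F` the function
`U₁(x,y,z) = (k₁x + m₁y + g₁z)·F(k₀x + m₀y + g₀z)` satisfies `Δ²U₁ = 0` everywhere on `ℝ³`. -/
theorem second_exact_solution (k₀ m₀ k₁ m₁ s g₀ g₁ : ℂ)
    (hne : k₀ ^ 2 + m₀ ^ 2 ≠ 0)
    (hs : s ^ 2 = k₀ ^ 2 + m₀ ^ 2)
    (hg0 : g₀ = Complex.I * s)
    (hg1 : g₁ = Complex.I * (k₀ ^ 3 * k₁ + m₀ ^ 3 * m₁) / (2 * s ^ 3))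
    (F : ℂ → ℂ) (hF : Differentiable ℂ F) (x y z : ℝ) :
    biharm (fun x y z =>
      (k₁ * (x : ℂ) + m₁ * (y : ℂ) + g₁ * (z : ℂ)) *
        F (k₀ * (x : ℂ) + m₀ * (y : ℂ) + g₀ * (z : ℂ))) x y z = 0 :=
  second_exact_solution_general k₀ m₀ k₁ m₁ s g₀ g₁ hs hg0 F hF x y z
end
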